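/- Let X₁,...,Xₙ be i.i.d. random variables each distributed as the product of two independent standard normal random variables, and let X̄ = (1/n)∑Xᵢ. If n ≥ 2, then for any real β, P(X̄ > n^{-1/2+β}) ≤ 2·exp(-n^β). -/

import Mathlib

/-!
Conditioning on the first factor, `E[exp (t X Y)] = E[exp (t² X² / 2)] = (1 - t²)^(-1/2)` for
`t² < 1`. With `t = n^(-1/2)`, the Chernoff bound for the independent sum gives
`P(∑ Xᵢ ≥ n^(1/2 + β)) ≤ exp (-n^β) (1 - 1/n)^(-n/2)`, and Bernoulli's inequality
`(1 - 1/n)^(n/2) ≥ 1/2` for `n ≥ 2` bounds the last factor by `2`.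
-/

open MeasureTheory ProbabilityTheory

/-- The distribution `𝓕` of the product of two independent standard normal random variables. -/
noncomputable def prodNormalDist : Measure ℝ :=
  ((gaussianReal 0 1).prod (gaussianReal 0 1)).map (fun p => p.1 * p.2)

open Real

lemma lintegral_exp_mul_gaussianReal (m : ℝ) (v : NNReal) (t : ℝ) :
    ∫⁻ x, ENNReal.ofReal (exp (t * x)) ∂gaussianReal m v =
      ENNReal.ofReal (exp (m * t + v * t ^ 2 / 2)) := by
  rw [← ofReal_integral_eq_lintegral_ofReal (integrable_exp_mul_gaussianReal t)
    (ae_of_all _ fun _ => (exp_pos _).le)]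
  exact congrArg ENNReal.ofReal (congrFun mgf_id_gaussianReal t)

lemma lintegral_exp_mul_sq_gaussianReal {c : ℝ} (hc : c < 1 / 2) :
    ∫⁻ x, ENNReal.ofReal (exp (c * x ^ 2)) ∂gaussianReal 0 1 =
      ENNReal.ofReal (√(1 - 2 * c))⁻¹ := by
  have hb : 0 < 1 / 2 - c := by linarith
  have hdensity (x : ℝ) : gaussianPDFReal 0 1 x * exp (c * x ^ 2) =
      (√(2 * π))⁻¹ * exp (-(1 / 2 - c) * x ^ 2) := by
    simp only [gaussianPDFReal_def, NNReal.coe_one, mul_one, sub_zero, mul_assoc, ← exp_add]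
    ring_nf
  rw [gaussianReal_of_var_ne_zero 0 one_ne_zero,
    lintegral_withDensity_eq_lintegral_mul _ (measurable_gaussianPDF 0 1) (by fun_prop)]
  simp_rw [Pi.mul_apply, gaussianPDF, ← ENNReal.ofReal_mul (gaussianPDFReal_nonneg 0 1 _),
    hdensity]
  rw [← ofReal_integral_eq_lintegral_ofReal ((integrable_exp_neg_mul_sq hb).const_mul _)
    (ae_of_all _ fun _ => by positivity), integral_const_mul, integral_gaussian,
    show π / (1 / 2 - c) = 2 * π / (1 - 2 * c) by field_simp,
    sqrt_div' _ (by linarith : (0:ℝ) ≤ 1 - 2 * c)]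
  have : 0 < √(2 * π) := by positivity
  field_simp

lemma lintegral_exp_mul_prodNormalDist {t : ℝ} (ht : t ^ 2 < 1) :
    ∫⁻ x, ENNReal.ofReal (exp (t * x)) ∂prodNormalDist =
      ENNReal.ofReal (√(1 - t ^ 2))⁻¹ := by
  rw [prodNormalDist, lintegral_map (by fun_prop) (by fun_prop), lintegral_prod _ (by fun_prop)]
  simp_rw [← mul_assoc, lintegral_exp_mul_gaussianReal, NNReal.coe_one, zero_mul, zero_add,
    one_mul, mul_pow, div_eq_inv_mul, ← mul_assoc]
  rw [lintegral_exp_mul_sq_gaussianReal (by linarith)]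
  congr 3
  ring

lemma integrable_exp_mul_prodNormalDist {t : ℝ} (ht : t ^ 2 < 1) :
    Integrable (fun x => exp (t * x)) prodNormalDist := by
  refine ⟨by fun_prop, ?_⟩
  rw [hasFiniteIntegral_iff_ofReal (ae_of_all _ fun _ => (exp_pos _).le),
    lintegral_exp_mul_prodNormalDist ht]
  exact ENNReal.ofReal_lt_top

lemma mgf_id_prodNormalDist {t : ℝ} (ht : t ^ 2 < 1) :
    mgf id prodNormalDist t = (√(1 - t ^ 2))⁻¹ := by
  rw [mgf, integral_eq_lintegral_of_nonneg_ae (ae_of_all _ fun _ => (exp_pos _).le) (by fun_prop)]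
  simp only [id, lintegral_exp_mul_prodNormalDist ht]
  exact ENNReal.toReal_ofReal (by positivity)

section

variable {Ω : Type*} [MeasurableSpace Ω] {μ : Measure Ω}

lemma integrable_exp_mul_of_map_eq_prodNormalDist {Y : Ω → ℝ} (hY : AEMeasurable Y μ)
    (hdist : μ.map Y = prodNormalDist) {t : ℝ} (ht : t ^ 2 < 1) :
    Integrable (fun ω => exp (t * Y ω)) μ := by
  have h := integrable_exp_mul_prodNormalDist ht
  rw [← hdist] at h
  exact (integrable_map_measure (by fun_prop) hY).mp h

lemma mgf_of_map_eq_prodNormalDist {Y : Ω → ℝ} (hY : AEMeasurable Y μ)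
    (hdist : μ.map Y = prodNormalDist) {t : ℝ} (ht : t ^ 2 < 1) :
    mgf Y μ t = (√(1 - t ^ 2))⁻¹ := by
  rw [← mgf_id_map hY, hdist, mgf_id_prodNormalDist ht]

lemma measureReal_sum_ge_le_of_iIndepFun_of_mgf_eq {ι : Type*} [Fintype ι] {X : ι → Ω → ℝ}
    (h_indep : iIndepFun X μ) (h_meas : ∀ i, Measurable (X i))
    {t M : ℝ} (ht : 0 ≤ t) (h_int : ∀ i, Integrable (fun ω => exp (t * X i ω)) μ)
    (h_mgf : ∀ i, mgf (X i) μ t = M) (ε : ℝ) :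
    μ.real {ω | ε ≤ ∑ i, X i ω} ≤ exp (-t * ε) * M ^ Fintype.card ι := by
  have := h_indep.isProbabilityMeasure
  have h := measure_ge_le_exp_mul_mgf ε ht
    (h_indep.integrable_exp_mul_sum h_meas (s := .univ) fun i _ => h_int i)
  rw [h_indep.mgf_sum h_meas, Finset.prod_congr rfl fun i _ => h_mgf i, Finset.prod_const,
    Finset.card_univ] at h
  simpa only [Finset.sum_apply] using h

end

lemma inv_sqrt_one_sub_inv_pow_le_two {n : ℕ} (hn : 2 ≤ n) :
    (√(1 - (n : ℝ)⁻¹))⁻¹ ^ n ≤ 2 := by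
  have hn' : (2 : ℝ) ≤ n := by exact_mod_cast hn
  have hinv : (n : ℝ)⁻¹ ≤ 1 := inv_le_one_of_one_le₀ (by linarith)
  have hbernoulli : 1 / 2 ≤ (1 - (n : ℝ)⁻¹) ^ ((n : ℝ) / 2) := by
    have h := one_add_mul_self_le_rpow_one_add (s := -(n : ℝ)⁻¹) (by linarith) (p := n / 2)
      (by linarith)
    rw [← sub_eq_add_neg, mul_neg, div_mul_eq_mul_div, mul_inv_cancel₀ (by positivity)] at h
    linarith
  have hsqrt : √(1 - (n : ℝ)⁻¹) ^ n = (1 - (n : ℝ)⁻¹) ^ ((n : ℝ) / 2) := by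
    rw [sqrt_eq_rpow, ← rpow_natCast, ← rpow_mul (by linarith)]
    ring_nf
  rw [inv_pow, hsqrt]
  calc ((1 - (n : ℝ)⁻¹) ^ ((n : ℝ) / 2))⁻¹
      ≤ (1 / 2)⁻¹ := inv_anti₀ (by norm_num) hbernoulli
    _ = 2 := by norm_num

/-- Let `X₁, ..., Xₙ` be i.i.d. random variables each distributed as the product of two
independent standard normals, and let `X̄ = (1/n) ∑ Xᵢ`.  If `n ≥ 2`, then for any real `β`,
`P(X̄ > n^(-1/2+β)) ≤ 2 * exp (-n^β)`. -/
theorem sample_mean_product_normal_tail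
    {Ω : Type*} [MeasurableSpace Ω] (μ : Measure Ω) [IsProbabilityMeasure μ]
    (n : ℕ) (hn : 2 ≤ n) (X : Fin n → Ω → ℝ)
    (hmeas : ∀ i, Measurable (X i))
    (hindep : iIndepFun X μ)
    (hdist : ∀ i, Measure.map (X i) μ = prodNormalDist)
    (β : ℝ) :
    μ {ω | (n : ℝ) ^ (-(1 : ℝ) / 2 + β) < (∑ i, X i ω) / n} ≤
      ENNReal.ofReal (2 * Real.exp (-(n : ℝ) ^ β)) := by
  have hn0 : (0 : ℝ) < n := by positivity
  set t : ℝ := (√n)⁻¹ with ht_def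
  have ht2 : t ^ 2 = (n : ℝ)⁻¹ := by rw [inv_pow, sq_sqrt hn0.le]
  have ht1 : t ^ 2 < 1 := ht2 ▸ inv_lt_one_of_one_lt₀ (by exact_mod_cast hn)
  set ε : ℝ := n * (n : ℝ) ^ (-(1 : ℝ) / 2 + β)
  have htε : t * ε = (n : ℝ) ^ β := by
    rw [ht_def, sqrt_eq_rpow, ← rpow_neg hn0.le, ← mul_assoc, ← rpow_add_one hn0.ne',
      ← rpow_add hn0]
    ring_nf
  have hevent : {ω | (n : ℝ) ^ (-(1 : ℝ) / 2 + β) < (∑ i, X i ω) / n} ⊆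
      {ω | ε ≤ ∑ i, X i ω} := Set.ofPred_subset_ofPred.2 fun ω hω => by
    rw [lt_div_iff₀ hn0, mul_comm] at hω
    exact hω.le
  have hchernoff := measureReal_sum_ge_le_of_iIndepFun_of_mgf_eq hindep hmeas (by positivity)
    (fun i => integrable_exp_mul_of_map_eq_prodNormalDist (hmeas i).aemeasurable (hdist i) ht1)
    (fun i => mgf_of_map_eq_prodNormalDist (hmeas i).aemeasurable (hdist i) ht1) ε
  rw [neg_mul, htε, ht2, Fintype.card_fin] at hchernoff
  calc μ {ω | (n : ℝ) ^ (-(1 : ℝ) / 2 + β) < (∑ i, X i ω) / n}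
      ≤ μ {ω | ε ≤ ∑ i, X i ω} := measure_mono hevent
    _ = ENNReal.ofReal (μ.real {ω | ε ≤ ∑ i, X i ω}) := (ofReal_measureReal).symm
    _ ≤ ENNReal.ofReal (2 * exp (-(n : ℝ) ^ β)) := by
      refine ENNReal.ofReal_le_ofReal (hchernoff.trans ?_)
      rw [mul_comm]
      gcongr
      exact inv_sqrt_one_sub_inv_pow_le_two hn
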